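/- arXiv:math/0405424 — 3 statements merged into one kernel-verified Lean document; each statement's English description precedes it below -/
import Mathlib

section
/- If two quaternions x and y have linearly dependent imaginary parts, then exp(x + y) = exp(x) * exp(y). -/
open scoped Quaternion
open NormedSpace Quaternion

theorem QuaternionAlgebra.commute_of_im_eq_smul {R : Type*} [CommRing R] {c₁ c₂ c₃ : R}
    {a b : ℍ[R,c₁,c₂,c₃]} {s : R} (h : b.im = s • a.im) : Commute a b := by
  rw [← a.re_add_im, ← b.re_add_im, h]
  exact (coe_commute b.re _).symm.add_right
    ((coe_commute a.re _).add_left ((Commute.refl a.im).smul_right s))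

theorem stmt6 (x y : ℍ[ℝ]) (h : ∃ s : ℝ, y.im = s • x.im ∨ x.im = s • y.im) :
    NormedSpace.exp (x + y) = NormedSpace.exp x * NormedSpace.exp y := by
  -- `exp_add_of_commute` is stated for normed `ℚ`-algebras.
  let := NormedAlgebra.restrictScalars ℚ ℝ ℍ[ℝ]
  obtain ⟨s, h | h⟩ := h
  · exact exp_add_of_commute (QuaternionAlgebra.commute_of_im_eq_smul h)
  · exact exp_add_of_commute (QuaternionAlgebra.commute_of_im_eq_smul h).symm
end

section
/- The exponential map restricted to pure imaginary quaternions is surjective onto the unit sphere of ℍ: for every quaternion y with ‖y‖ = 1 there exists a pure imaginary quaternion a with exp(a) = y. -/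
open scoped Quaternion
open NormedSpace Quaternion

/-! On the unit sphere write `y = cos θ + sin θ • u` with `θ = arccos y.re ∈ [0, π]` and `u` a unit
pure imaginary quaternion in the direction of `y.im` (any unit `u` if `y.im = 0`). Since `u² = -1`,
the exponential series of `θ • u` splits into its even and odd parts, `exp (θ • u) = cos θ + sin θ • u`. -/

namespace Quaternion

theorem sq_re_add_sq_norm_im (q : ℍ[ℝ]) : q.re ^ 2 + ‖q.im‖ ^ 2 = ‖q‖ ^ 2 := by
  simp only [sq ‖_‖, ← normSq_eq_norm_mul_self, normSq_def', re_im, imI_im, imJ_im, imK_im]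
  ring

theorem abs_re_le_norm (q : ℍ[ℝ]) : |q.re| ≤ ‖q‖ :=
  abs_le_of_sq_le_sq (by rw [← sq_re_add_sq_norm_im]; exact le_add_of_nonneg_right (sq_nonneg _))
    (norm_nonneg q)

theorem cos_arccos_re {q : ℍ[ℝ]} (hq : ‖q‖ = 1) : Real.cos (Real.arccos q.re) = q.re := by
  have h := abs_re_le_norm q
  rw [hq] at h
  exact Real.cos_arccos (abs_le.1 h).1 (abs_le.1 h).2

theorem sin_arccos_re {q : ℍ[ℝ]} (hq : ‖q‖ = 1) : Real.sin (Real.arccos q.re) = ‖q.im‖ := by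
  have h := sq_re_add_sq_norm_im q
  rw [hq, one_pow] at h
  rw [Real.sin_arccos, ← eq_sub_of_add_eq' h, Real.sqrt_sq (norm_nonneg _)]

theorem exists_re_eq_zero_norm_eq_one_smul_eq_im (q : ℍ[ℝ]) :
    ∃ u : ℍ[ℝ], u.re = 0 ∧ ‖u‖ = 1 ∧ ‖q.im‖ • u = q.im := by
  rcases eq_or_ne q.im 0 with h | h
  · refine ⟨Complex.I, by simp, ?_, by simp [h]⟩
    refine (pow_eq_one_iff_of_nonneg (norm_nonneg _) two_ne_zero).1 ?_
    rw [sq, ← normSq_eq_norm_mul_self]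
    simp [normSq_def']
  · exact ⟨‖q.im‖⁻¹ • q.im, by simp, norm_smul_inv_norm h, smul_inv_smul₀ (norm_ne_zero_iff.2 h) _⟩

theorem exp_smul_of_re_eq_zero_of_norm_eq_one {u : ℍ[ℝ]} (hu : u.re = 0) (hu1 : ‖u‖ = 1)
    (θ : ℝ) : exp (θ • u) = ↑(Real.cos θ) + Real.sin θ • u := by
  have hθu : ‖θ • u‖ = |θ| := by rw [norm_smul, hu1, mul_one, Real.norm_eq_abs]
  rw [exp_of_re_eq_zero _ (by simp [hu]), hθu, Real.cos_abs, smul_smul]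
  congr 2
  rcases abs_choice θ with h | h <;> rw [h]
  · exact div_mul_cancel_of_imp fun h0 => by simp [h0]
  · rw [Real.sin_neg, neg_div_neg_eq]
    exact div_mul_cancel_of_imp fun h0 => by simp [h0]

end Quaternion

theorem stmt13 (y : ℍ[ℝ]) (hy : ‖y‖ = 1) : ∃ a : ℍ[ℝ], a.re = 0 ∧ exp a = y := by
  obtain ⟨u, hu, hu1, hyu⟩ := exists_re_eq_zero_norm_eq_one_smul_eq_im y
  refine ⟨Real.arccos y.re • u, by simp [hu], ?_⟩
  rw [exp_smul_of_re_eq_zero_of_norm_eq_one hu hu1, cos_arccos_re hy, sin_arccos_re hy, hyu,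
    re_add_im]
end

section
/- The exponential map exp : ℍ → ℍ \ {0} is surjective: every nonzero quaternion y equals exp(x) for some quaternion x. -/
/-!
Every quaternion `q` lies in a copy of `ℂ` inside `ℍ`, namely the image of an
`ℝ`-algebra embedding `φ : ℂ →ₐ[ℝ] ℍ` sending `I` to the unit vector along `q.im` (or to `i` when
`q` is real). Since `exp` commutes with continuous algebra homomorphisms, `φ (log z)` is a
logarithm of `q = φ z` whenever `q ≠ 0`.
-/

open scoped Quaternion
open NormedSpace Quaternion

theorem NormedSpace.exp_algHom_log {A : Type*} [NormedRing A] [NormedAlgebra ℝ A]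
    [CompleteSpace A] (φ : ℂ →ₐ[ℝ] A) {z : ℂ} (hz : z ≠ 0) :
    exp (φ (Complex.log z)) = φ z := by
  rw [← map_exp_of_mem_ball (𝕂 := ℝ) φ φ.toLinearMap.continuous_of_finiteDimensional _
    (by simp [expSeries_radius_eq_top]), ← Complex.exp_eq_exp_ℂ, Complex.exp_log hz]

namespace Quaternion

theorem inv_norm_im_smul_im_mul_self {q : ℍ[ℝ]} (hq : q.im ≠ 0) :
    (‖q.im‖⁻¹ • q.im) * (‖q.im‖⁻¹ • q.im) = -1 := by
  have hnorm : ‖q.im‖ ≠ 0 := norm_ne_zero_iff.mpr hq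
  rw [smul_mul_smul_comm, ← sq q.im, im_sq, normSq_eq_norm_mul_self, smul_neg, ← coe_smul,
    smul_eq_mul, mul_mul_mul_comm, inv_mul_cancel₀ hnorm, one_mul, coe_one]

theorem exists_algHom_complex_apply_eq (q : ℍ[ℝ]) : ∃ (φ : ℂ →ₐ[ℝ] ℍ[ℝ]) (z : ℂ), φ z = q := by
  by_cases hq : q.im = 0
  · refine ⟨ofComplex, q.re, ?_⟩
    rw [coe_ofComplex, coeComplex_coe, ← q.re_add_im, hq, add_zero, re_coe]
  · refine ⟨Complex.liftAux _ (inv_norm_im_smul_im_mul_self hq), ⟨q.re, ‖q.im‖⟩, ?_⟩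
    rw [Complex.liftAux_apply, smul_smul, mul_inv_cancel₀ (norm_ne_zero_iff.mpr hq), one_smul]
    exact q.re_add_im

end Quaternion

theorem stmt14 (y : ℍ[ℝ]) (hy : y ≠ 0) : ∃ x : ℍ[ℝ], NormedSpace.exp x = y := by
  obtain ⟨φ, z, rfl⟩ := exists_algHom_complex_apply_eq y
  have hz : z ≠ 0 := by
    rintro rfl
    exact hy (map_zero φ)
  exact ⟨φ (Complex.log z), exp_algHom_log φ hz⟩
end
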